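/- Let M = [m_{ij}] be an n×n real Nekrasov matrix with m_{ii} > 0 for all i. Then for every diagonal matrix D = diag(d_1,…,d_n) with 0 ≤ d_i ≤ 1 for all i, the matrix I − D + DM is invertible and ‖(I − D + DM)^{-1}‖_∞ ≤ max_{1 ≤ i ≤ n} η_i(M)/min{m_{ii} − h_i(M), 1}. -/

import Mathlib

open Finset

noncomputable def nekH {n : ℕ} {𝕜 : Type*} [RCLike 𝕜] (A : Matrix (Fin n) (Fin n) 𝕜) : Fin n → ℝ
  | i =>
    (∑ j : Fin n, if h : j < i then ‖A i j‖ / ‖A j j‖ * nekH A j else 0)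
      + ∑ j : Fin n, if i < j then ‖A i j‖ else 0
termination_by i => i.val
decreasing_by exact h

def IsNekrasov {n : ℕ} {𝕜 : Type*} [RCLike 𝕜] (A : Matrix (Fin n) (Fin n) 𝕜) : Prop :=
  ∀ i, nekH A i < ‖A i i‖

noncomputable def nekZ {n : ℕ} {𝕜 : Type*} [RCLike 𝕜] (A : Matrix (Fin n) (Fin n) 𝕜) : Fin n → ℝ
  | i => (∑ j : Fin n, if h : j < i then ‖A i j‖ / ‖A j j‖ * nekZ A j else 0) + 1
termination_by i => i.val
decreasing_by exact h

noncomputable def nekEta {n : ℕ} {𝕜 : Type*} [RCLike 𝕜] (M : Matrix (Fin n) (Fin n) 𝕜) : Fin n → ℝ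
  | i => (∑ j : Fin n, if h : j < i then ‖M i j‖ / min ‖M j j‖ 1 * nekEta M j else 0) + 1
termination_by i => i.val
decreasing_by exact h

noncomputable def linftyNorm {n : ℕ} {𝕜 : Type*} [RCLike 𝕜] (A : Matrix (Fin n) (Fin n) 𝕜) : ℝ :=
  ⨆ i, ∑ j, ‖A i j‖

noncomputable def rPlus {n : ℕ} (M : Matrix (Fin n) (Fin n) ℝ) (i : Fin n) : ℝ :=
  Finset.fold max 0 (fun j => M i j) (Finset.univ.erase i)

noncomputable def BPlus {n : ℕ} (M : Matrix (Fin n) (Fin n) ℝ) : Matrix (Fin n) (Fin n) ℝ :=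
  Matrix.of fun i j => M i j - rPlus M i

def IsBNekrasov {n : ℕ} (M : Matrix (Fin n) (Fin n) ℝ) : Prop :=
  IsNekrasov (BPlus M) ∧ ∀ i, 0 < BPlus M i i

def IsLCPSolution {n : ℕ} (M : Matrix (Fin n) (Fin n) ℝ) (q x : Fin n → ℝ) : Prop :=
  (∀ i, 0 ≤ x i) ∧ (∀ i, 0 ≤ (M.mulVec x + q) i) ∧ ∑ i, (M.mulVec x + q) i * x i = 0

def IsPMatrix {n : ℕ} (M : Matrix (Fin n) (Fin n) ℝ) : Prop :=
  ∀ S : Finset (Fin n), 0 < (M.submatrix (fun i : S => (i : Fin n)) (fun j : S => (j : Fin n))).det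

/-!
Write `A = I - D + DM`. For any matrix with nonzero diagonal, induction along the rows bounds
`|a_{ii}| |x_i|` by `z_i(A) ‖Ax‖_∞ + h_i(A) ‖x‖_∞`, where `z` is the recursion of `h` started
from `1` instead of the upper off-diagonal row sums. Comparing the recursions entrywise gives
`h_i(A) ≤ d_i h_i(M)` and `z_i(A) ≤ η_i(M)`, so at a coordinate `k` where `|x|` is maximal
`min (m_{kk} - h_k(M)) 1 · ‖x‖_∞ ≤ (a_{kk} - h_k(A)) ‖x‖_∞ ≤ η_k(M) ‖Ax‖_∞`.
Such a bound `‖x‖_∞ ≤ C ‖Ax‖_∞` forces `A` to be injective and, tested on sign vectors,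
bounds every row sum of `A⁻¹` by `C`.
-/

open Matrix

section Recursions

variable {n : ℕ} {𝕜 : Type*} [RCLike 𝕜]

lemma nekH_nonneg (A : Matrix (Fin n) (Fin n) 𝕜) (i : Fin n) : 0 ≤ nekH A i := by
  induction i using WellFoundedLT.induction with
  | _ i ih =>
    rw [nekH]
    refine add_nonneg (sum_nonneg fun j _ => ?_) (sum_nonneg fun j _ => ?_)
    · split_ifs with hj
      exacts [mul_nonneg (by positivity) (ih j hj), le_rfl]
    · split_ifs <;> positivity

lemma one_le_nekZ (A : Matrix (Fin n) (Fin n) 𝕜) (i : Fin n) : 1 ≤ nekZ A i := by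
  induction i using WellFoundedLT.induction with
  | _ i ih =>
    rw [nekZ]
    refine le_add_of_nonneg_left (sum_nonneg fun j _ => ?_)
    split_ifs with hj
    exacts [mul_nonneg (by positivity) (zero_le_one.trans (ih j hj)), le_rfl]

lemma norm_diag_mul_norm_le_norm_mulVec_add (A : Matrix (Fin n) (Fin n) 𝕜) (x : Fin n → 𝕜)
    (i : Fin n) : ‖A i i‖ * ‖x i‖ ≤ ‖(A *ᵥ x) i‖ + ∑ j ∈ univ.erase i, ‖A i j‖ * ‖x j‖ := by
  have hsplit : (A *ᵥ x) i = A i i * x i + ∑ j ∈ univ.erase i, A i j * x j :=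
    (add_sum_erase univ (fun j => A i j * x j) (mem_univ i)).symm
  calc ‖A i i‖ * ‖x i‖ = ‖(A *ᵥ x) i - ∑ j ∈ univ.erase i, A i j * x j‖ := by
        rw [hsplit, add_sub_cancel_right, norm_mul]
    _ ≤ ‖(A *ᵥ x) i‖ + ∑ j ∈ univ.erase i, ‖A i j‖ * ‖x j‖ := by
        refine (norm_sub_le _ _).trans (add_le_add le_rfl ?_)
        simpa only [norm_mul] using norm_sum_le (univ.erase i) fun j => A i j * x j

lemma norm_diag_mul_norm_le (A : Matrix (Fin n) (Fin n) 𝕜) (hA : ∀ j, A j j ≠ 0)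
    {x : Fin n → 𝕜} {X Y : ℝ} (hX : ∀ j, ‖x j‖ ≤ X) (hY : ∀ j, ‖(A *ᵥ x) j‖ ≤ Y) (i : Fin n) :
    ‖A i i‖ * ‖x i‖ ≤ nekZ A i * Y + nekH A i * X := by
  induction i using WellFoundedLT.induction with
  | _ i ih =>
    set b : Fin n → ℝ := fun j =>
      (if h : j < i then ‖A i j‖ / ‖A j j‖ * nekZ A j else 0) * Y
        + (if h : j < i then ‖A i j‖ / ‖A j j‖ * nekH A j else 0) * X
        + (if i < j then ‖A i j‖ else 0) * X with hb
    have hterm : ∀ j ∈ univ.erase i, ‖A i j‖ * ‖x j‖ ≤ b j := by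
      intro j hj
      rcases lt_or_gt_of_ne (ne_of_mem_erase hj) with hji | hij
      · have hAjj : 0 < ‖A j j‖ := norm_pos_iff.mpr (hA j)
        have hxj : ‖x j‖ ≤ (nekZ A j * Y + nekH A j * X) / ‖A j j‖ :=
          (le_div_iff₀ hAjj).mpr (by rw [mul_comm]; exact ih j hji)
        simp only [hb, dif_pos hji, if_neg (not_lt_of_gt hji), zero_mul, add_zero]
        calc ‖A i j‖ * ‖x j‖ ≤ ‖A i j‖ * ((nekZ A j * Y + nekH A j * X) / ‖A j j‖) := by
              gcongr
          _ = _ := by ring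
      · simp only [hb, dif_neg (not_lt_of_gt hij), if_pos hij, zero_mul, zero_add]
        gcongr
        exact hX j
    have hb0 : ∀ j, 0 ≤ b j := fun j => by
      have := one_le_nekZ A j; have := nekH_nonneg A j
      have := (norm_nonneg _).trans (hX i); have := (norm_nonneg _).trans (hY i)
      simp only [hb]
      split_ifs <;> positivity
    have hbsum : ∑ j, b j = (nekZ A i - 1) * Y + nekH A i * X := by
      rw [nekZ, nekH]
      simp only [hb, sum_add_distrib, ← sum_mul]
      ring
    have := norm_diag_mul_norm_le_norm_mulVec_add A x i
    have := (sum_le_sum hterm).trans (sum_le_univ_sum_of_nonneg hb0 (s := univ.erase i))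
    linarith [hY i]

lemma exists_forall_norm_le_and_sub_nekH_mul_le [Nonempty (Fin n)]
    (A : Matrix (Fin n) (Fin n) 𝕜) (hA : ∀ j, A j j ≠ 0) (x : Fin n → 𝕜) {Y : ℝ}
    (hY : ∀ j, ‖(A *ᵥ x) j‖ ≤ Y) :
    ∃ k, (∀ j, ‖x j‖ ≤ ‖x k‖) ∧ (‖A k k‖ - nekH A k) * ‖x k‖ ≤ nekZ A k * Y := by
  obtain ⟨k, hk⟩ := Finite.exists_max fun j => ‖x j‖
  refine ⟨k, hk, ?_⟩
  linarith [norm_diag_mul_norm_le A hA hk hY k]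

end Recursions

lemma isUnit_det_and_linftyNorm_inv_le {n : ℕ} [Nonempty (Fin n)]
    (A : Matrix (Fin n) (Fin n) ℝ) {C : ℝ}
    (h : ∀ (x : Fin n → ℝ) (Y : ℝ), (∀ j, ‖(A *ᵥ x) j‖ ≤ Y) → ∀ i, ‖x i‖ ≤ C * Y) :
    IsUnit A.det ∧ linftyNorm A⁻¹ ≤ C := by
  have hinj : Function.Injective A.mulVec := fun x y hxy => funext fun i => by
    have := h (x - y) 0 (fun j => by simp [mulVec_sub, hxy]) i
    rw [mul_zero, norm_le_zero_iff, Pi.sub_apply, sub_eq_zero] at this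
    exact this
  have hdet : IsUnit A.det :=
    (A.isUnit_iff_isUnit_det).mp (mulVec_injective_iff_isUnit.mp hinj)
  refine ⟨hdet, ciSup_le fun i => ?_⟩
  set u : Fin n → ℝ := fun j => SignType.sign (A⁻¹ i j) with hu
  have hAu : A *ᵥ (A⁻¹ *ᵥ u) = u := by
    rw [mulVec_mulVec, mul_nonsing_inv A hdet, one_mulVec]
  have hu1 : ∀ j, ‖(A *ᵥ (A⁻¹ *ᵥ u)) j‖ ≤ 1 := fun j => by
    rw [hAu, hu]
    rcases lt_trichotomy (A⁻¹ i j) 0 with h | h | h <;> simp [sign_neg, sign_pos, h]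
  have hrow : ∑ j, ‖A⁻¹ i j‖ = (A⁻¹ *ᵥ u) i := by
    simp only [mulVec, dotProduct, hu, self_mul_sign, Real.norm_eq_abs]
  rw [hrow, ← mul_one C]
  exact (le_abs_self _).trans (h _ 1 hu1 i)

section Interpolation

/- `interp` in the names below refers to `1 - diagonal d + diagonal d * M`, whose `i`-th row
interpolates between the `i`-th rows of `1` and `M`. -/

variable {n : ℕ} {M : Matrix (Fin n) (Fin n) ℝ} {d : Fin n → ℝ}

lemma min_le_one_sub_add_mul {t m : ℝ} (ht₀ : 0 ≤ t) (ht₁ : t ≤ 1) :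
    min m 1 ≤ 1 - t + t * m := by
  rcases le_total m 1 with h | h
  · rw [min_eq_left h]; nlinarith
  · rw [min_eq_right h]; nlinarith

lemma interp_apply_self (i : Fin n) :
    (1 - diagonal d + diagonal d * M) i i = 1 - d i + d i * M i i := by
  simp

lemma interp_apply_of_ne {i j : Fin n} (hij : i ≠ j) :
    (1 - diagonal d + diagonal d * M) i j = d i * M i j := by
  simp [one_apply_ne hij, diagonal_apply_ne _ hij]

variable (hd : ∀ i, 0 ≤ d i ∧ d i ≤ 1)
include hd

lemma norm_interp_apply_of_ne {i j : Fin n} (hij : i ≠ j) :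
    ‖(1 - diagonal d + diagonal d * M) i j‖ = d i * ‖M i j‖ := by
  rw [interp_apply_of_ne hij, norm_mul, Real.norm_of_nonneg (hd i).1]

variable (hdiag : ∀ i, 0 < M i i)
include hdiag

lemma min_le_norm_interp_apply_self (i : Fin n) :
    min ‖M i i‖ 1 ≤ ‖(1 - diagonal d + diagonal d * M) i i‖ := by
  have h := min_le_one_sub_add_mul (m := M i i) (hd i).1 (hd i).2
  rw [interp_apply_self, Real.norm_of_nonneg (hdiag i).le]
  exact h.trans (le_abs_self _)

lemma interp_apply_self_pos (i : Fin n) :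
    0 < ‖(1 - diagonal d + diagonal d * M) i i‖ :=
  (lt_min (norm_pos_iff.mpr (hdiag i).ne') one_pos).trans_le
    (min_le_norm_interp_apply_self hd hdiag i)

lemma nekH_interp_le (i : Fin n) :
    nekH (1 - diagonal d + diagonal d * M) i ≤ d i * nekH M i := by
  set A := 1 - diagonal d + diagonal d * M
  induction i using WellFoundedLT.induction with
  | _ i ih =>
    rw [nekH, nekH, mul_add, mul_sum, mul_sum]
    gcongr with j _ j _
    · split_ifs with hji
      · -- `h_j(A)/a_jj ≤ h_j(M)/m_jj` because `d_j h_j(M) m_jj ≤ h_j(M) (1 - d_j + d_j m_jj)`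
        have hratio : nekH A j / ‖A j j‖ ≤ nekH M j / ‖M j j‖ := by
          rw [div_le_div_iff₀ (interp_apply_self_pos hd hdiag j) (norm_pos_iff.mpr (hdiag j).ne'),
            interp_apply_self, Real.norm_of_nonneg (hdiag j).le, Real.norm_of_nonneg (by
              nlinarith [hdiag j, hd j])]
          nlinarith [mul_le_mul_of_nonneg_right (ih j hji) (hdiag j).le,
            mul_nonneg (sub_nonneg.mpr (hd j).2) (nekH_nonneg M j)]
        rw [norm_interp_apply_of_ne hd hji.ne']
        calc d i * ‖M i j‖ / ‖A j j‖ * nekH A j = d i * (‖M i j‖ * (nekH A j / ‖A j j‖)) := by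
              ring
          _ ≤ d i * (‖M i j‖ * (nekH M j / ‖M j j‖)) := by
              have := (hd i).1
              gcongr
          _ = d i * (‖M i j‖ / ‖M j j‖ * nekH M j) := by ring
      · simp
    · split_ifs with hij
      · exact (norm_interp_apply_of_ne hd hij.ne).le
      · simp

lemma nekZ_interp_le_nekEta (i : Fin n) :
    nekZ (1 - diagonal d + diagonal d * M) i ≤ nekEta M i := by
  set A := 1 - diagonal d + diagonal d * M
  induction i using WellFoundedLT.induction with
  | _ i ih =>
    rw [nekZ, nekEta]
    gcongr with j _
    split_ifs with hji
    · have hnorm : ‖A i j‖ ≤ ‖M i j‖ := by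
        rw [norm_interp_apply_of_ne hd hji.ne']
        exact mul_le_of_le_one_left (norm_nonneg _) (hd i).2
      have hmin : 0 < min ‖M j j‖ 1 := lt_min (norm_pos_iff.mpr (hdiag j).ne') one_pos
      have := one_le_nekZ A j
      gcongr
      · exact min_le_norm_interp_apply_self hd hdiag j
      · exact ih j hji
    · rfl

lemma min_sub_nekH_le_interp (i : Fin n) :
    min (M i i - nekH M i) 1 ≤
      ‖(1 - diagonal d + diagonal d * M) i i‖
        - nekH (1 - diagonal d + diagonal d * M) i := by
  have h := min_le_one_sub_add_mul (m := M i i - nekH M i) (hd i).1 (hd i).2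
  rw [interp_apply_self, Real.norm_of_nonneg (by nlinarith [hd i, hdiag i])]
  nlinarith [nekH_interp_le hd hdiag i, (hd i).1]

lemma norm_le_sup_mul_of_norm_interp_mulVec_le [Nonempty (Fin n)] (hNek : IsNekrasov M)
    (x : Fin n → ℝ) {Y : ℝ}
    (hY : ∀ j, ‖((1 - diagonal d + diagonal d * M) *ᵥ x) j‖ ≤ Y) (i : Fin n) :
    ‖x i‖ ≤ univ.sup' univ_nonempty (fun k => nekEta M k / min (M k k - nekH M k) 1) * Y := by
  set A := 1 - diagonal d + diagonal d * M
  obtain ⟨k, hk, hxk⟩ := exists_forall_norm_le_and_sub_nekH_mul_le A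
    (fun j => norm_pos_iff.mp (interp_apply_self_pos hd hdiag j)) x hY
  have hY0 : 0 ≤ Y := (norm_nonneg _).trans (hY k)
  have hμ : 0 < min (M k k - nekH M k) 1 := by
    have := hNek k
    rw [Real.norm_of_nonneg (hdiag k).le] at this
    exact lt_min (sub_pos.mpr this) one_pos
  have hxk' : ‖x k‖ ≤ nekEta M k / min (M k k - nekH M k) 1 * Y := by
    rw [div_mul_eq_mul_div, le_div_iff₀ hμ, mul_comm]
    calc min (M k k - nekH M k) 1 * ‖x k‖ ≤ (‖A k k‖ - nekH A k) * ‖x k‖ := by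
          gcongr; exact min_sub_nekH_le_interp hd hdiag k
      _ ≤ nekZ A k * Y := hxk
      _ ≤ nekEta M k * Y := by gcongr; exact nekZ_interp_le_nekEta hd hdiag k
  have hsup := le_sup' (fun k => nekEta M k / min (M k k - nekH M k) 1) (mem_univ k)
  exact (hk i).trans (hxk'.trans (by gcongr))

end Interpolation

theorem stmt9 {n : ℕ} (hn : 0 < n) (M : Matrix (Fin n) (Fin n) ℝ)
    (hdiag : ∀ i, 0 < M i i) (hNek : IsNekrasov M)
    (d : Fin n → ℝ) (hd : ∀ i, 0 ≤ d i ∧ d i ≤ 1) :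
    IsUnit (1 - Matrix.diagonal d + Matrix.diagonal d * M).det ∧
      linftyNorm (1 - Matrix.diagonal d + Matrix.diagonal d * M)⁻¹ ≤
        Finset.univ.sup' ⟨⟨0, hn⟩, Finset.mem_univ _⟩
          (fun i => nekEta M i / min (M i i - nekH M i) 1) := by
  have : Nonempty (Fin n) := ⟨⟨0, hn⟩⟩
  exact isUnit_det_and_linftyNorm_inv_le _ fun x _ hY =>
    norm_le_sup_mul_of_norm_interp_mulVec_le hd hdiag hNek x hY
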